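/- Let a ∈ ℝ^12 be the coefficient vector of a quadratic system with (p2, q2) ≠ (0, 0). Then the greatest common divisor of p2 and q2 in ℂ[x,y] is a product (b·x + c·y)·(d·x + e·y) of two linear forms over ℂ with b·e − c·d ≠ 0 (i.e., two non-proportional linear factors) if and only if μ0(a) = 0, K(a,x,y) is identically zero, and H(a,x,y) is not identically zero. -/

import Mathlib

open MvPolynomial Finset

noncomputable section

namespace QSinf

/-!  Coefficient conventions: for `a : Fin 12 → ℝ`,
`a 0 = a00, a 1 = a10, a 2 = a01, a 3 = a20, a 4 = a11, a 5 = a02,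
 a 6 = b00, a 7 = b10, a 8 = b01, a 9 = b20, a 10 = b11, a 11 = b02`,
so that `p = a00 + a10*x + a01*y + a20*x^2 + 2*a11*x*y + a02*y^2` and
`q = b00 + b10*x + b01*y + b20*x^2 + 2*b11*x*y + b02*y^2`. -/

/-- linear part of `p` -/
def p1f (a : Fin 12 → ℝ) (x y : ℝ) : ℝ := a 1 * x + a 2 * y
/-- linear part of `q` -/
def q1f (a : Fin 12 → ℝ) (x y : ℝ) : ℝ := a 7 * x + a 8 * y
/-- quadratic part of `p` -/
def p2f (a : Fin 12 → ℝ) (x y : ℝ) : ℝ := a 3 * x ^ 2 + 2 * a 4 * x * y + a 5 * y ^ 2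
/-- quadratic part of `q` -/
def q2f (a : Fin 12 → ℝ) (x y : ℝ) : ℝ := a 9 * x ^ 2 + 2 * a 10 * x * y + a 11 * y ^ 2
/-- the polynomial `p` -/
def pf (a : Fin 12 → ℝ) (x y : ℝ) : ℝ := a 0 + p1f a x y + p2f a x y
/-- the polynomial `q` -/
def qf (a : Fin 12 → ℝ) (x y : ℝ) : ℝ := a 6 + q1f a x y + q2f a x y

/-- the invariant μ₀ -/
def mu0f (a : Fin 12 → ℝ) : ℝ :=
  (a 3 * a 11 - a 5 * a 9) ^ 2 - 4 * (a 3 * a 10 - a 4 * a 9) * (a 4 * a 11 - a 5 * a 10)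

/-- the comitant `K`, the Jacobian of `(p₂, q₂)` -/
def Kf (a : Fin 12 → ℝ) (x y : ℝ) : ℝ :=
  (2 * a 3 * x + 2 * a 4 * y) * (2 * a 10 * x + 2 * a 11 * y)
    - (2 * a 4 * x + 2 * a 5 * y) * (2 * a 9 * x + 2 * a 10 * y)

/-- the comitant `H`: minus the discriminant (in `x²,xy,y²`-coefficients) of
`α·p₂ + β·q₂` evaluated at `α = y`, `β = -x` -/
def Hf (a : Fin 12 → ℝ) (x y : ℝ) : ℝ :=
  -((2 * (a 4 * y - a 10 * x)) ^ 2 - 4 * (a 3 * y - a 9 * x) * (a 5 * y - a 11 * x))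

/-- the comitant `C₂ = y·p₂ - x·q₂` -/
def C2f (a : Fin 12 → ℝ) (x y : ℝ) : ℝ := y * p2f a x y - x * q2f a x y

/-- coefficient of `x³` in `C₂` -/
def cc0 (a : Fin 12 → ℝ) : ℝ := -(a 9)
/-- coefficient of `x²y` in `C₂` -/
def cc1 (a : Fin 12 → ℝ) : ℝ := a 3 - 2 * a 10
/-- coefficient of `xy²` in `C₂` -/
def cc2 (a : Fin 12 → ℝ) : ℝ := 2 * a 4 - a 11
/-- coefficient of `y³` in `C₂` -/
def cc3 (a : Fin 12 → ℝ) : ℝ := a 5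

/-- the invariant η, the discriminant of the binary cubic `C₂` -/
def etaf (a : Fin 12 → ℝ) : ℝ :=
  (cc1 a) ^ 2 * (cc2 a) ^ 2 - 4 * cc0 a * (cc2 a) ^ 3 - 4 * (cc1 a) ^ 3 * cc3 a
    + 18 * cc0 a * cc1 a * cc2 a * cc3 a - 27 * (cc0 a) ^ 2 * (cc3 a) ^ 2

/-- the comitant `M`, twice the Hessian of `C₂` -/
def Mf (a : Fin 12 → ℝ) (x y : ℝ) : ℝ :=
  2 * ((6 * cc0 a * x + 2 * cc1 a * y) * (2 * cc2 a * x + 6 * cc3 a * y)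
    - (2 * cc1 a * x + 2 * cc2 a * y) ^ 2)

/-- the comitant `L = 2K - 4H - M` -/
def Lf (a : Fin 12 → ℝ) (x y : ℝ) : ℝ := 2 * Kf a x y - 4 * Hf a x y - Mf a x y
/-- the comitant `N = K + H` -/
def Nf (a : Fin 12 → ℝ) (x y : ℝ) : ℝ := Kf a x y + Hf a x y
/-- the comitant `R = L + 8K` -/
def Rf (a : Fin 12 → ℝ) (x y : ℝ) : ℝ := Lf a x y + 8 * Kf a x y
/-- the comitant `K₁ = p₁q₂ - p₂q₁` -/
def K1f (a : Fin 12 → ℝ) (x y : ℝ) : ℝ := p1f a x y * q2f a x y - p2f a x y * q1f a x y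

/-- `p₂` as a polynomial in `ℂ[x,y]` -/
def p2C (a : Fin 12 → ℝ) : MvPolynomial (Fin 2) ℂ :=
  C (a 3 : ℂ) * X 0 ^ 2 + C (2 * a 4 : ℂ) * X 0 * X 1 + C (a 5 : ℂ) * X 1 ^ 2
/-- `q₂` as a polynomial in `ℂ[x,y]` -/
def q2C (a : Fin 12 → ℝ) : MvPolynomial (Fin 2) ℂ :=
  C (a 9 : ℂ) * X 0 ^ 2 + C (2 * a 10 : ℂ) * X 0 * X 1 + C (a 11 : ℂ) * X 1 ^ 2

/-- `d` is a greatest common divisor of `p` and `q` -/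
def IsGcdOf (d p q : MvPolynomial (Fin 2) ℂ) : Prop :=
  d ∣ p ∧ d ∣ q ∧ ∀ e : MvPolynomial (Fin 2) ℂ, e ∣ p → e ∣ q → e ∣ d

/-- the cubic form `C₂` regarded over `ℂ` -/
def C2c (a : Fin 12 → ℝ) (x y : ℂ) : ℂ :=
  (cc0 a : ℂ) * x ^ 3 + (cc1 a : ℂ) * x ^ 2 * y + (cc2 a : ℂ) * x * y ^ 2 + (cc3 a : ℂ) * y ^ 3

/-- the complex linear form `b·x + c·y` is proportional to a real linear form -/
def RealProp (b c : ℂ) : Prop := ∃ (l : ℂ) (r s : ℝ), l ≠ 0 ∧ b = l * (r : ℂ) ∧ c = l * (s : ℂ)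

/-- coefficient vector of the translated system `p(x+α, y+β), q(x+α, y+β)` -/
def rT (a : Fin 12 → ℝ) (α β : ℝ) : Fin 12 → ℝ :=
  ![a 0 + a 1 * α + a 2 * β + a 3 * α ^ 2 + 2 * a 4 * α * β + a 5 * β ^ 2,
    a 1 + 2 * a 3 * α + 2 * a 4 * β,
    a 2 + 2 * a 4 * α + 2 * a 5 * β,
    a 3, a 4, a 5,
    a 6 + a 7 * α + a 8 * β + a 9 * α ^ 2 + 2 * a 10 * α * β + a 11 * β ^ 2,
    a 7 + 2 * a 9 * α + 2 * a 10 * β,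
    a 8 + 2 * a 10 * α + 2 * a 11 * β,
    a 9, a 10, a 11]

/-- binary forms in `x = X 0`, `y = X 1` with real coefficients -/
abbrev R2 := MvPolynomial (Fin 2) ℝ

/-- ∂/∂x -/
def pdx (f : R2) : R2 := pderiv 0 f
/-- ∂/∂y -/
def pdy (f : R2) : R2 := pderiv 1 f
/-- the Jacobian of two binary forms -/
def jacobP (f g : R2) : R2 := pdx f * pdy g - pdy f * pdx g
/-- the second transvectant `(f,g)⁽²⁾` -/
def transv2 (f g : R2) : R2 :=
  pdx (pdx f) * pdy (pdy g) - 2 * pdx (pdy f) * pdx (pdy g) + pdy (pdy f) * pdx (pdx g)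

/-- `p₁` as a binary form -/
def p1P (a : Fin 12 → ℝ) : R2 := C (a 1) * X 0 + C (a 2) * X 1
/-- `q₁` as a binary form -/
def q1P (a : Fin 12 → ℝ) : R2 := C (a 7) * X 0 + C (a 8) * X 1
/-- `p₂` as a binary form -/
def p2P (a : Fin 12 → ℝ) : R2 := C (a 3) * X 0 ^ 2 + C (2 * a 4) * X 0 * X 1 + C (a 5) * X 1 ^ 2
/-- `q₂` as a binary form -/
def q2P (a : Fin 12 → ℝ) : R2 := C (a 9) * X 0 ^ 2 + C (2 * a 10) * X 0 * X 1 + C (a 11) * X 1 ^ 2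
/-- `C₀ = y·p₀ - x·q₀` -/
def C0P (a : Fin 12 → ℝ) : R2 := C (a 0) * X 1 - C (a 6) * X 0
/-- `C₁ = y·p₁ - x·q₁` -/
def C1P (a : Fin 12 → ℝ) : R2 := X 1 * p1P a - X 0 * q1P a
/-- `C₂ = y·p₂ - x·q₂` -/
def C2P (a : Fin 12 → ℝ) : R2 := X 1 * p2P a - X 0 * q2P a
/-- the comitant `K` as a binary form -/
def KP (a : Fin 12 → ℝ) : R2 := jacobP (p2P a) (q2P a)
/-- the comitant `M` (twice the Hessian of `C₂`) as a binary form -/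
def MP (a : Fin 12 → ℝ) : R2 :=
  2 * (pdx (pdx (C2P a)) * pdy (pdy (C2P a)) - (pdx (pdy (C2P a))) ^ 2)
/-- the comitant `H` as a binary form -/
def HP (a : Fin 12 → ℝ) : R2 :=
  -((2 * (C (a 4) * X 1 - C (a 10) * X 0)) ^ 2
    - 4 * (C (a 3) * X 1 - C (a 9) * X 0) * (C (a 5) * X 1 - C (a 11) * X 0))
/-- the comitant `L = 2K - 4H - M` as a binary form -/
def LP (a : Fin 12 → ℝ) : R2 := 2 * KP a - 4 * HP a - MP a
/-- the comitant `K₁ = p₁q₂ - p₂q₁` as a binary form -/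
def K1P (a : Fin 12 → ℝ) : R2 := p1P a * q2P a - p2P a * q1P a
/-- the invariant `D₁ = a10 + b01` -/
def D1v (a : Fin 12 → ℝ) : ℝ := a 1 + a 8
/-- the comitant `D₂ = ∂p₂/∂x + ∂q₂/∂y` -/
def D2P (a : Fin 12 → ℝ) : R2 := pdx (p2P a) + pdy (q2P a)
/-- `J₁ = Jacob(C₀, D₂)` -/
def J1P (a : Fin 12 → ℝ) : R2 := jacobP (C0P a) (D2P a)
/-- `J₂ = Jacob(C₀, C₂)` -/
def J2P (a : Fin 12 → ℝ) : R2 := jacobP (C0P a) (C2P a)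
/-- `J₃ = Discrim(C₁)`: for `C₁ = -b10·x² + (a10-b01)·xy + a01·y²` this is `B² - 4AC` -/
def J3v (a : Fin 12 → ℝ) : ℝ := (a 1 - a 8) ^ 2 + 4 * a 7 * a 2
/-- `J₄ = Jacob(C₁, D₂)` -/
def J4P (a : Fin 12 → ℝ) : R2 := jacobP (C1P a) (D2P a)
/-- the invariant `κ = (M,K)⁽²⁾` (a constant binary form) -/
def kappaP (a : Fin 12 → ℝ) : R2 := transv2 (MP a) (KP a)
/-- the invariant `κ₁ = (M,C₁)⁽²⁾` (a constant binary form) -/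
def kappa1P (a : Fin 12 → ℝ) : R2 := transv2 (MP a) (C1P a)
/-- the invariant `κ₂ = -J₁` -/
def kappa2f (a : Fin 12 → ℝ) : ℝ :=
  -((-(a 6)) * (2 * a 4 + 2 * a 11) - a 0 * (2 * a 3 + 2 * a 10))
/-- `ζ = M - 2K` -/
def zetaP (a : Fin 12 → ℝ) : R2 := MP a - 2 * KP a
/-- the comitant `K₂ = 4·Jacob(J₂,ζ) + 3·Jacob(C₁,ζ)·D₁ - ζ·(16J₁ + 3J₃ + 3D₁²)` -/
def K2P (a : Fin 12 → ℝ) : R2 :=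
  4 * jacobP (J2P a) (zetaP a) + C (3 * D1v a) * jacobP (C1P a) (zetaP a)
    - zetaP a * (16 * J1P a + C (3 * J3v a + 3 * (D1v a) ^ 2))
/-- the comitant `K₃ = 2C₂²(2J₁-3J₃) + C₂(3C₀K - 2C₁J₄) + 2K₁(C₁D₂ + 3K₁)` -/
def K3P (a : Fin 12 → ℝ) : R2 :=
  2 * (C2P a) ^ 2 * (2 * J1P a - C (3 * J3v a))
    + C2P a * (3 * C0P a * KP a - 2 * C1P a * J4P a)
    + 2 * K1P a * (C1P a * D2P a + 3 * K1P a)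

/-- polynomials in the 12 coefficient variables (indices 0–11) and `x = X 12`, `y = X 13` -/
abbrev R14 := MvPolynomial (Fin 14) ℝ

/-- the differential operator `L₁` -/
def L1op (f : R14) : R14 :=
  2 * X 0 * pderiv 1 f + X 1 * pderiv 3 f + C (1/2 : ℝ) * X 2 * pderiv 4 f
    + 2 * X 6 * pderiv 7 f + X 7 * pderiv 9 f + C (1/2 : ℝ) * X 8 * pderiv 10 f
/-- the differential operator `L₂` -/
def L2op (f : R14) : R14 :=
  2 * X 0 * pderiv 2 f + X 2 * pderiv 5 f + C (1/2 : ℝ) * X 1 * pderiv 4 f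
    + 2 * X 6 * pderiv 8 f + X 8 * pderiv 11 f + C (1/2 : ℝ) * X 7 * pderiv 10 f
/-- the differential operator `𝓛 = x·L₂ - y·L₁` -/
def LLop (f : R14) : R14 := X 12 * L2op f - X 13 * L1op f

/-- `μ₀` as an element of `ℝ[a₀₀,…,b₀₂,x,y]` -/
def mu0P : R14 :=
  (X 3 * X 11 - X 5 * X 9) ^ 2 - 4 * (X 3 * X 10 - X 4 * X 9) * (X 4 * X 11 - X 5 * X 10)

/-- `μᵢ = 𝓛⁽ⁱ⁾(μ₀)/i!` -/
def muP (i : ℕ) : R14 := ((i.factorial : ℝ)⁻¹) • (LLop^[i] mu0P)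

/-- evaluation point assigning the coefficients `a` and the values `x`, `y` -/
def evalAt (a : Fin 12 → ℝ) (x y : ℝ) : Fin 14 → ℝ := fun i =>
  if h : (i : ℕ) < 12 then a ⟨(i : ℕ), h⟩ else if (i : ℕ) = 12 then x else y

/-- the value `μᵢ(a, x, y)` -/
def muf (i : ℕ) (a : Fin 12 → ℝ) (x y : ℝ) : ℝ := eval (evalAt a x y) (muP i)

/-- complex evaluation point: coefficients `a` (cast to `ℂ`) and complex values `x`, `y` -/
def evalAtC (a : Fin 12 → ℝ) (x y : ℂ) : Fin 14 → ℂ := fun i =>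
  if h : (i : ℕ) < 12 then ((a ⟨(i : ℕ), h⟩ : ℝ) : ℂ) else if (i : ℕ) = 12 then x else y

/-- the value of `μᵢ` extended to complex arguments -/
def mufC (i : ℕ) (a : Fin 12 → ℝ) (x y : ℂ) : ℂ := aeval (evalAtC a x y) (muP i)

/-- the homogenization `P(X,Y,Z) = Z²·p(X/Z,Y/Z)` over `ℂ` -/
def PfC (a : Fin 12 → ℝ) (Xv Yv Zv : ℂ) : ℂ :=
  (a 0 : ℂ) * Zv ^ 2 + ((a 1 : ℂ) * Xv + (a 2 : ℂ) * Yv) * Zv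
    + ((a 3 : ℂ) * Xv ^ 2 + 2 * (a 4 : ℂ) * Xv * Yv + (a 5 : ℂ) * Yv ^ 2)
/-- the homogenization `Q(X,Y,Z) = Z²·q(X/Z,Y/Z)` over `ℂ` -/
def QfC (a : Fin 12 → ℝ) (Xv Yv Zv : ℂ) : ℂ :=
  (a 6 : ℂ) * Zv ^ 2 + ((a 7 : ℂ) * Xv + (a 8 : ℂ) * Yv) * Zv
    + ((a 9 : ℂ) * Xv ^ 2 + 2 * (a 10 : ℂ) * Xv * Yv + (a 11 : ℂ) * Yv ^ 2)

/-- `b` is the coefficient vector `r_g(a)` of the system transformed by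
`g ∈ GL(2,ℝ)` with matrix `m` and inverse matrix `n`:
`(p̃,q̃)(x̃,ỹ) = m·(p,q)(g⁻¹(x̃,ỹ))`. -/
def IsTransformed (m n : Matrix (Fin 2) (Fin 2) ℝ) (a b : Fin 12 → ℝ) : Prop :=
  m * n = 1 ∧ ∀ x y : ℝ,
    pf b x y = m 0 0 * pf a (n 0 0 * x + n 0 1 * y) (n 1 0 * x + n 1 1 * y)
               + m 0 1 * qf a (n 0 0 * x + n 0 1 * y) (n 1 0 * x + n 1 1 * y)
    ∧ qf b x y = m 1 0 * pf a (n 0 0 * x + n 0 1 * y) (n 1 0 * x + n 1 1 * y)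
               + m 1 1 * qf a (n 0 0 * x + n 0 1 * y) (n 1 0 * x + n 1 1 * y)

/-- `(P2, Q2)` is the pair of degree-2 homogeneous parts of the system transformed by
`g ∈ GL(2,ℝ)` with matrix `m` and inverse matrix `n`. -/
def Quad2Transformed (m n : Matrix (Fin 2) (Fin 2) ℝ) (a : Fin 12 → ℝ)
    (P2 Q2 : ℝ → ℝ → ℝ) : Prop :=
  m * n = 1 ∧ ∀ x y : ℝ,
    P2 x y = m 0 0 * p2f a (n 0 0 * x + n 0 1 * y) (n 1 0 * x + n 1 1 * y)
               + m 0 1 * q2f a (n 0 0 * x + n 0 1 * y) (n 1 0 * x + n 1 1 * y)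
    ∧ Q2 x y = m 1 0 * p2f a (n 0 0 * x + n 0 1 * y) (n 1 0 * x + n 1 1 * y)
               + m 1 1 * q2f a (n 0 0 * x + n 0 1 * y) (n 1 0 * x + n 1 1 * y)

lemma expand2 (b c d e : ℂ) :
    (C b * X 0 + C c * X 1) * (C d * X 0 + C e * X 1) =
      (C (b*d) * X 0 ^ 2 + C (b*e + c*d) * X 0 * X 1 + C (c*e) * X 1 ^ 2 :
        MvPolynomial (Fin 2) ℂ) := by
  simp only [map_add, map_mul]; ring

lemma factor_quad (A B Cc : ℂ) (hd : A * Cc - B ^ 2 ≠ 0) :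
    ∃ b c d e : ℂ, b * e - c * d ≠ 0 ∧
      (C b * X 0 + C c * X 1) * (C d * X 0 + C e * X 1) =
        (C A * X 0 ^ 2 + C (2*B) * X 0 * X 1 + C Cc * X 1 ^ 2 : MvPolynomial (Fin 2) ℂ) := by
  by_cases hA : A = 0
  · refine ⟨0, 1, 2*B, Cc, ?_, ?_⟩
    · subst hA; intro h0; apply hd; linear_combination (B/2) * h0
    · rw [expand2, hA]; norm_num
  · obtain ⟨s, hs⟩ := IsAlgClosed.exists_pow_nat_eq (B^2 - A*Cc) (n := 2) two_pos
    have hs0 : s ≠ 0 := by intro h0; apply hd; rw [h0] at hs; linear_combination hs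
    refine ⟨A, B + s, 1, (B - s)/A, ?_, ?_⟩
    · field_simp
      intro h0
      exact hs0 (by linear_combination h0/(-2))
    · rw [expand2]
      have h1 : A * ((B - s)/A) + (B + s) * 1 = 2*B := by field_simp; ring
      have h2 : (B + s) * ((B - s)/A) = Cc := by field_simp; linear_combination -hs
      rw [mul_one, h1, h2]

lemma vanish_rep (A A4 Cc b c d e : ℂ) (hδ : b * e - c * d ≠ 0)
    (E1 : A * c^2 - 2 * A4 * b * c + Cc * b^2 = 0)
    (E2 : A * e^2 - 2 * A4 * d * e + Cc * d^2 = 0) :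
    ∃ s : ℂ, A = s * (b * d) ∧ 2 * A4 = s * (b * e + c * d) ∧ Cc = s * (c * e) := by
  refine ⟨(-2*A*e*c + 2*A4*(b*e + c*d) - 2*Cc*b*d) / (b*e - c*d)^2, ?_, ?_, ?_⟩
  · rw [div_mul_eq_mul_div, eq_div_iff (pow_ne_zero 2 hδ)]; linear_combination (d^2) * E1 + (b^2) * E2
  · rw [div_mul_eq_mul_div, eq_div_iff (pow_ne_zero 2 hδ)]; linear_combination (2*d*e) * E1 + (2*b*c) * E2
  · rw [div_mul_eq_mul_div, eq_div_iff (pow_ne_zero 2 hδ)]; linear_combination (e^2) * E1 + (c^2) * E2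

lemma eval_p2C (a : Fin 12 → ℝ) (u v : ℂ) :
    eval ![u, v] (p2C a) = (a 3 : ℂ) * u^2 + 2 * (a 4 : ℂ) * u * v + (a 5 : ℂ) * v^2 := by
  simp [p2C]

lemma eval_q2C (a : Fin 12 → ℝ) (u v : ℂ) :
    eval ![u, v] (q2C a) = (a 9 : ℂ) * u^2 + 2 * (a 10 : ℂ) * u * v + (a 11 : ℂ) * v^2 := by
  simp [q2C]

lemma p2C_zero (a : Fin 12 → ℝ) (h3 : a 3 = 0) (h4 : a 4 = 0) (h5 : a 5 = 0) :
    p2C a = 0 := by simp [p2C, h3, h4, h5]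

lemma q2C_zero (a : Fin 12 → ℝ) (h3 : a 9 = 0) (h4 : a 10 = 0) (h5 : a 11 = 0) :
    q2C a = 0 := by simp [q2C, h3, h4, h5]

lemma eval_zero_of_dvd {b c d e : ℂ} {P : MvPolynomial (Fin 2) ℂ}
    (hdvd : (C b * X 0 + C c * X 1) * (C d * X 0 + C e * X 1) ∣ P) :
    eval ![c, -b] P = 0 ∧ eval ![e, -d] P = 0 := by
  obtain ⟨g, hg⟩ := hdvd
  constructor <;> rw [hg] <;> simp <;> ring_nf <;> simp

/-- For a quadratic system with `(p₂,q₂) ≠ (0,0)`, the gcd of `p₂` and `q₂`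
in `ℂ[x,y]` is a product `(b·x+c·y)·(d·x+e·y)` of two non-proportional linear forms iff
`μ₀(a) = 0`, `K ≡ 0` and `H ≢ 0`. -/
theorem gcd_two_distinct_linear_iff (a : Fin 12 → ℝ) (h : ¬(p2C a = 0 ∧ q2C a = 0)) :
    (∃ b c d e : ℂ, b * e - c * d ≠ 0 ∧
        IsGcdOf ((C b * X 0 + C c * X 1) * (C d * X 0 + C e * X 1)) (p2C a) (q2C a)) ↔
      (mu0f a = 0 ∧ (∀ x y : ℝ, Kf a x y = 0) ∧ ∃ x y : ℝ, Hf a x y ≠ 0) := by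
  constructor
  · rintro ⟨b, c, d, e, hbe, hd1, hd2, -⟩
    have hp := eval_zero_of_dvd hd1
    have hq := eval_zero_of_dvd hd2
    rw [eval_p2C] at hp; rw [eval_p2C] at hp
    rw [eval_q2C] at hq; rw [eval_q2C] at hq
    obtain ⟨s, hs3, hs4, hs5⟩ :=
      vanish_rep (a 3) (a 4) (a 5) b c d e hbe (by linear_combination hp.1)
        (by linear_combination hp.2)
    obtain ⟨t, ht3, ht4, ht5⟩ :=
      vanish_rep (a 9) (a 10) (a 11) b c d e hbe (by linear_combination hq.1)
        (by linear_combination hq.2)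
    have hm1 : a 3 * a 10 - a 4 * a 9 = 0 := by
      have : ((a 3 * a 10 - a 4 * a 9 : ℝ) : ℂ) = 0 := by
        push_cast
        linear_combination (((a 10 : ℝ) : ℂ)) * hs3 - (((a 4 : ℝ) : ℂ)) * ht3
          + (s * (b*d) / 2) * ht4 - (t * (b*d) / 2) * hs4
      exact_mod_cast this
    have hm2 : a 3 * a 11 - a 5 * a 9 = 0 := by
      have : ((a 3 * a 11 - a 5 * a 9 : ℝ) : ℂ) = 0 := by
        push_cast
        linear_combination (((a 11 : ℝ) : ℂ)) * hs3 - (((a 5 : ℝ) : ℂ)) * ht3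
          + (s * (b*d)) * ht5 - (t * (b*d)) * hs5
      exact_mod_cast this
    have hm3 : a 4 * a 11 - a 5 * a 10 = 0 := by
      have : ((a 4 * a 11 - a 5 * a 10 : ℝ) : ℂ) = 0 := by
        push_cast
        linear_combination (((a 11 : ℝ) : ℂ) / 2) * hs4 - (((a 5 : ℝ) : ℂ) / 2) * ht4
          + (s * (b*e + c*d) / 2) * ht5 - (t * (b*e + c*d) / 2) * hs5
      exact_mod_cast this
    refine ⟨by unfold mu0f; linear_combination (a 3 * a 11 - a 5 * a 9 + 0) * hm2
        - 4 * (a 4 * a 11 - a 5 * a 10) * hm1 - 0 * hm3, ?_, ?_⟩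
    · intro x y
      unfold Kf
      linear_combination (4*x^2) * hm1 + (4*x*y) * hm2 + (4*y^2) * hm3
    · have hst : s ≠ 0 ∨ t ≠ 0 := by
        by_contra h0
        push_neg at h0
        apply h
        obtain ⟨hs0, ht0⟩ := h0
        subst hs0; subst ht0
        constructor
        · refine p2C_zero a ?_ ?_ ?_
          · exact_mod_cast hs3.trans (zero_mul _)
          · have h4' : ((a 4 : ℝ) : ℂ) = 0 := by linear_combination hs4 / 2
            exact_mod_cast h4'
          · exact_mod_cast hs5.trans (zero_mul _)
        · refine q2C_zero a ?_ ?_ ?_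
          · exact_mod_cast ht3.trans (zero_mul _)
          · have h10' : ((a 10 : ℝ) : ℂ) = 0 := by linear_combination ht4 / 2
            exact_mod_cast h10'
          · exact_mod_cast ht5.trans (zero_mul _)
      rcases hst with hs0 | ht0
      · refine ⟨0, 1, fun h0 => ?_⟩
        have key : ((Hf a 0 1 : ℝ) : ℂ) = -(s^2 * (b*e - c*d)^2) := by
          unfold Hf
          push_cast
          linear_combination (-(2*((a 4 : ℝ) : ℂ)) - s*(b*e + c*d)) * hs4
            + (4*s*(c*e)) * hs3 + (4*((a 3 : ℝ) : ℂ)) * hs5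
        rw [h0] at key
        rw [Complex.ofReal_zero] at key
        have : s^2 * (b*e - c*d)^2 = 0 := by linear_combination key
        rcases mul_eq_zero.mp this with h' | h'
        · exact hs0 (pow_eq_zero_iff two_ne_zero |>.mp h')
        · exact hbe (pow_eq_zero_iff two_ne_zero |>.mp h')
      · refine ⟨1, 0, fun h0 => ?_⟩
        have key : ((Hf a 1 0 : ℝ) : ℂ) = -(t^2 * (b*e - c*d)^2) := by
          unfold Hf
          push_cast
          linear_combination (-(2*((a 10 : ℝ) : ℂ)) - t*(b*e + c*d)) * ht4
            + (4*t*(c*e)) * ht3 + (4*((a 9 : ℝ) : ℂ)) * ht5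
        rw [h0] at key
        rw [Complex.ofReal_zero] at key
        have : t^2 * (b*e - c*d)^2 = 0 := by linear_combination key
        rcases mul_eq_zero.mp this with h' | h'
        · exact ht0 (pow_eq_zero_iff two_ne_zero |>.mp h')
        · exact hbe (pow_eq_zero_iff two_ne_zero |>.mp h')
  · rintro ⟨-, hK, hH⟩
    have hm1 : a 3 * a 10 - a 4 * a 9 = 0 := by
      have h10 := hK 1 0; unfold Kf at h10; linear_combination h10 / 4
    have hm3 : a 4 * a 11 - a 5 * a 10 = 0 := by
      have h01 := hK 0 1; unfold Kf at h01; linear_combination h01 / 4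
    have hm2 : a 3 * a 11 - a 5 * a 9 = 0 := by
      have h11 := hK 1 1; unfold Kf at h11; linear_combination h11 / 4 - hm1 - hm3
    by_cases hp3 : a 3 = 0 ∧ a 4 = 0 ∧ a 5 = 0
    · obtain ⟨x, y, hxy⟩ := hH
      have hqd : a 9 * a 11 - a 10 ^ 2 ≠ 0 := by
        intro h0; apply hxy; unfold Hf; rw [hp3.1, hp3.2.1, hp3.2.2]
        linear_combination (4*x^2) * h0
      have hqC : (a 9 : ℂ) * (a 11 : ℂ) - (a 10 : ℂ) ^ 2 ≠ 0 := by
        intro h0; apply hqd; exact_mod_cast h0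
      obtain ⟨b, c, d, e, hbe, hfact⟩ := factor_quad (a 9 : ℂ) (a 10 : ℂ) (a 11 : ℂ) hqC
      have hfq : (C b * X 0 + C c * X 1) * (C d * X 0 + C e * X 1) = q2C a := hfact
      refine ⟨b, c, d, e, hbe, ?_, ?_, ?_⟩
      · rw [p2C_zero a hp3.1 hp3.2.1 hp3.2.2]; exact dvd_zero _
      · rw [hfq]
      · intro e' _ h2; rw [hfq]; exact h2
    · have hex : ∃ l : ℝ, a 9 = l * a 3 ∧ a 10 = l * a 4 ∧ a 11 = l * a 5 := by
        by_cases h3 : a 3 = 0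
        · by_cases h4 : a 4 = 0
          · have h5 : a 5 ≠ 0 := fun h5 => hp3 ⟨h3, h4, h5⟩
            have h9 : a 9 = 0 := by
              have := hm2; rw [h3] at this
              rcases mul_eq_zero.mp (by linarith : a 5 * a 9 = 0) with h' | h'
              · exact absurd h' h5
              · exact h'
            have h10 : a 10 = 0 := by
              have := hm3; rw [h4] at this
              rcases mul_eq_zero.mp (by linarith : a 5 * a 10 = 0) with h' | h'
              · exact absurd h' h5
              · exact h'
            exact ⟨a 11 / a 5, by rw [h9, h3]; ring, by rw [h10, h4]; ring, by field_simp⟩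
          · have h9 : a 9 = 0 := by
              have := hm1; rw [h3] at this
              rcases mul_eq_zero.mp (by linarith : a 4 * a 9 = 0) with h' | h'
              · exact absurd h' h4
              · exact h'
            exact ⟨a 10 / a 4, by rw [h9, h3]; ring, by field_simp,
              by field_simp; linear_combination hm3⟩
        · exact ⟨a 9 / a 3, by field_simp, by field_simp; linear_combination hm1,
            by field_simp; linear_combination hm2⟩
      obtain ⟨l, h9, h10, h11⟩ := hex
      obtain ⟨x, y, hxy⟩ := hH
      have hdisc : a 3 * a 5 - a 4 ^ 2 ≠ 0 := by
        intro h0; apply hxy; unfold Hf; rw [h9, h10, h11]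
        linear_combination (4*(y - l*x)^2) * h0
      have hdC : (a 3 : ℂ) * (a 5 : ℂ) - (a 4 : ℂ) ^ 2 ≠ 0 := by
        intro h0; apply hdisc; exact_mod_cast h0
      obtain ⟨b, c, d, e, hbe, hfact⟩ := factor_quad (a 3 : ℂ) (a 4 : ℂ) (a 5 : ℂ) hdC
      have hfp : (C b * X 0 + C c * X 1) * (C d * X 0 + C e * X 1) = p2C a := hfact
      have hq2 : q2C a = C (l : ℂ) * p2C a := by
        unfold q2C p2C
        rw [h9, h10, h11]
        push_cast
        simp only [map_mul]
        ring
      refine ⟨b, c, d, e, hbe, ?_, ?_, ?_⟩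
      · rw [hfp]
      · rw [hfp, hq2]; exact dvd_mul_left _ _
      · intro e' h1 _; rw [hfp]; exact h1
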